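/- arXiv:2409.15225 — 5 statements merged into one kernel-verified Lean document; each statement's English description precedes it below -/
import Mathlib

section
/- Let μ be a positive integer and let p ∈ V_μ. Then W1(p, δ_μ) ≤ 2 μ G[p], where δ_μ is the Dirac distribution on ℕ concentrated at μ. (Note that when μ is a positive integer, the shifted Bernoulli distribution p* equals δ_μ and G[p*] = 0, so this reads W1(p, p*) ≤ 2μ (G[p] − G[p*]).) -/
/-- Cumulative distribution function of a pmf on ℕ: `F n = ∑_{m ≤ n} p m`. -/
noncomputable def cdf (p : ℕ → ℝ) (n : ℕ) : ℝ := ∑ m ∈ Finset.range (n + 1), p m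

/-- Wasserstein-1 distance between two pmfs on ℕ, `W1(p,q) = ∑_{n ≥ 0} |F_n - H_n|`. -/
noncomputable def W1 (p q : ℕ → ℝ) : ℝ := ∑' n : ℕ, |cdf p n - cdf q n|

/-- Gini index of a pmf on ℕ with mean μ: `G[p] = (1/(2μ)) ∑_i ∑_j |i-j| p_i p_j`. -/
noncomputable def Gini (μ : ℝ) (p : ℕ → ℝ) : ℝ :=
  (1 / (2 * μ)) * ∑' i : ℕ, ∑' j : ℕ, |(i : ℝ) - (j : ℝ)| * p i * p j

/-- The shifted Bernoulli distribution with mean μ: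
`p*_{⌊μ⌋} = 1 - μ + ⌊μ⌋`, `p*_{⌊μ⌋+1} = μ - ⌊μ⌋`, `p*_n = 0` otherwise. -/
noncomputable def pstar (μ : ℝ) : ℕ → ℝ := fun n =>
  if n = ⌊μ⌋₊ then 1 - μ + (⌊μ⌋₊ : ℝ)
  else if n = ⌊μ⌋₊ + 1 then μ - (⌊μ⌋₊ : ℝ)
  else 0

/-- The Dirac distribution on ℕ concentrated at `k`. -/
noncomputable def dirac (k : ℕ) : ℕ → ℝ := fun n => if n = k then 1 else 0

/-!
For a Dirac target, `|F n - H n|` is the `p`-mass of the points `j` such that `n` lies between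
`j` and `μ`; summing over `n`, each `j` is counted `|j - μ|` times, so `W1(p, δ_μ) ≤ ∑ |j - μ| p_j`.
Since `μ` is the mean, `|i - μ| = |∑_j (i - j) p_j| ≤ ∑_j |i - j| p_j`; multiplying by `p_i` and
summing over `i` bounds the right side by `∑_i ∑_j |i - j| p_i p_j = 2 μ G[p]`.
-/

open Finset

theorem hasSum_ite_le_cdf (p : ℕ → ℝ) (n : ℕ) :
    HasSum (fun j => if j ≤ n then p j else 0) (cdf p n) := by
  convert hasSum_sum_of_ne_finset_zero (s := range (n + 1)) (fun j hj => ?_) using 1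
  · exact sum_congr rfl fun j hj => by simp [Nat.lt_succ_iff.mp (mem_range.mp hj)]
  · simp_all
  · infer_instance

theorem cdf_dirac (k n : ℕ) : cdf (dirac k) n = if k ≤ n then 1 else 0 := by
  simp [cdf, dirac, sum_ite_eq']

variable {p : ℕ → ℝ}

theorem hasSum_ite_lt_one_sub_cdf (hsum : HasSum p 1) (n : ℕ) :
    HasSum (fun j => if n < j then p j else 0) (1 - cdf p n) := by
  have hsplit : (fun j => if n < j then p j else 0) = fun j => p j - if j ≤ n then p j else 0 := by
    funext j
    split_ifs <;> first | omega | simp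
  exact hsplit ▸ hsum.sub (hasSum_ite_le_cdf p n)

theorem abs_cdf_sub_cdf_dirac (hpos : ∀ n, 0 ≤ p n) (hsum : HasSum p 1) (k n : ℕ) :
    |cdf p n - cdf (dirac k) n| = ∑' j, if n ∈ Ico (min j k) (max j k) then p j else 0 := by
  rw [cdf_dirac]
  split_ifs with hkn
  · have hF : cdf p n ≤ 1 := by
      simpa using (hasSum_ite_lt_one_sub_cdf hsum n).nonneg fun j => by
        split_ifs <;> simp [hpos j]
    rw [abs_of_nonpos (by linarith), neg_sub, ← (hasSum_ite_lt_one_sub_cdf hsum n).tsum_eq]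
    refine tsum_congr fun j => ?_
    simp only [mem_Ico, min_le_iff, lt_max_iff]
    split_ifs <;> first | rfl | omega
  · have hF : 0 ≤ cdf p n := sum_nonneg fun j _ => hpos j
    rw [sub_zero, abs_of_nonneg hF, ← (hasSum_ite_le_cdf p n).tsum_eq]
    refine tsum_congr fun j => ?_
    simp only [mem_Ico, min_le_iff, lt_max_iff]
    split_ifs <;> first | rfl | omega

theorem sum_range_ite_mem_Ico_le {x : ℝ} (hx : 0 ≤ x) (N j k : ℕ) :
    ∑ n ∈ range N, (if n ∈ Ico (min j k) (max j k) then x else 0) ≤ |(k : ℝ) - j| * x := by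
  rw [sum_ite_mem, sum_const, nsmul_eq_mul]
  gcongr
  calc ((range N ∩ Ico (min j k) (max j k)).card : ℝ)
      ≤ (Ico (min j k) (max j k)).card := by exact_mod_cast card_le_card inter_subset_right
    _ = |(k : ℝ) - j| := by
      rw [Nat.card_Ico, Nat.cast_sub min_le_max, Nat.cast_max, Nat.cast_min, max_sub_min_eq_abs]

theorem W1_dirac_le (hpos : ∀ n, 0 ≤ p n) (hsum : HasSum p 1) (k : ℕ)
    (hk : Summable fun j : ℕ => |(k : ℝ) - j| * p j) :
    W1 p (dirac k) ≤ ∑' j : ℕ, |(k : ℝ) - j| * p j := by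
  refine Real.tsum_le_of_sum_range_le (fun n => abs_nonneg _) fun N => ?_
  have hsummable : ∀ n ∈ range N,
      Summable fun j => if n ∈ Ico (min j k) (max j k) then p j else 0 := fun n _ =>
    Summable.of_nonneg_of_le (fun j => by split_ifs <;> simp [hpos j])
      (fun j => by split_ifs <;> simp [hpos j]) hsum.summable
  calc ∑ n ∈ range N, |cdf p n - cdf (dirac k) n|
      = ∑' j, ∑ n ∈ range N, if n ∈ Ico (min j k) (max j k) then p j else 0 := by
        simp_rw [abs_cdf_sub_cdf_dirac hpos hsum]
        exact (Summable.tsum_finsetSum hsummable).symm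
    _ ≤ ∑' j : ℕ, |(k : ℝ) - j| * p j :=
        Summable.tsum_le_tsum (fun j => sum_range_ite_mem_Ico_le (hpos j) N j k)
          (summable_sum hsummable) hk

theorem summable_abs_sub_mul (hpos : ∀ n, 0 ≤ p n) (hsum : Summable p)
    (hmean : Summable fun n : ℕ => (n : ℝ) * p n) (x : ℝ) :
    Summable fun j : ℕ => |x - j| * p j := by
  refine Summable.of_nonneg_of_le (fun j => mul_nonneg (abs_nonneg _) (hpos j)) (fun j => ?_)
    ((hsum.mul_left |x|).add hmean)
  have : |x - j| ≤ |x| + j := by simpa using abs_sub x (j : ℝ)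
  nlinarith [hpos j]

variable {m : ℝ}

theorem hasSum_sub_mul (hsum : HasSum p 1) (hmean : HasSum (fun n : ℕ => (n : ℝ) * p n) m)
    (x : ℝ) : HasSum (fun j : ℕ => (x - j) * p j) (x - m) := by
  simpa [sub_mul] using (hsum.mul_left x).sub hmean

theorem abs_sub_le_tsum_abs_sub_mul (hpos : ∀ n, 0 ≤ p n) (hsum : HasSum p 1)
    (hmean : HasSum (fun n : ℕ => (n : ℝ) * p n) m) (x : ℝ) :
    |x - m| ≤ ∑' j : ℕ, |x - j| * p j := by
  have habs : ∀ j : ℕ, |(x - j) * p j| = |x - j| * p j := fun j => by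
    rw [abs_mul, abs_of_nonneg (hpos j)]
  calc |x - m| = ‖∑' j : ℕ, (x - j) * p j‖ := by rw [(hasSum_sub_mul hsum hmean x).tsum_eq]; rfl
    _ ≤ ∑' j : ℕ, ‖(x - j) * p j‖ := norm_tsum_le_tsum_norm <| by
        simpa only [Real.norm_eq_abs, habs] using
          summable_abs_sub_mul hpos hsum.summable hmean.summable x
    _ = ∑' j : ℕ, |x - j| * p j := tsum_congr fun j => habs j

theorem tsum_abs_sub_mul_le (hpos : ∀ n, 0 ≤ p n) (hsum : HasSum p 1)
    (hmean : HasSum (fun n : ℕ => (n : ℝ) * p n) m) {x : ℝ} (hx : 0 ≤ x) :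
    ∑' j : ℕ, |x - j| * p j ≤ x + m := by
  have hbound := (hsum.mul_left x).add hmean
  rw [mul_one] at hbound
  rw [← hbound.tsum_eq]
  refine Summable.tsum_le_tsum (fun j => ?_)
    (summable_abs_sub_mul hpos hsum.summable hmean.summable x) hbound.summable
  have : |x - j| ≤ x + j := by simpa [abs_of_nonneg hx] using abs_sub x (j : ℝ)
  nlinarith [hpos j]

theorem tsum_abs_sub_mul_le_tsum_tsum (hpos : ∀ n, 0 ≤ p n) (hsum : HasSum p 1)
    (hmean : HasSum (fun n : ℕ => (n : ℝ) * p n) m) :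
    ∑' i : ℕ, |m - i| * p i ≤ ∑' i : ℕ, ∑' j : ℕ, |(i : ℝ) - j| * p i * p j := by
  have hfactor : ∀ i : ℕ,
      ∑' j : ℕ, |(i : ℝ) - j| * p i * p j = p i * ∑' j : ℕ, |(i : ℝ) - j| * p j := fun i => by
    rw [← tsum_mul_left]
    exact tsum_congr fun j => by ring
  simp_rw [hfactor]
  refine Summable.tsum_le_tsum (fun i => ?_)
    (summable_abs_sub_mul hpos hsum.summable hmean.summable m) ?_
  · rw [abs_sub_comm, mul_comm]
    exact mul_le_mul_of_nonneg_left (abs_sub_le_tsum_abs_sub_mul hpos hsum hmean i) (hpos i)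
  · refine Summable.of_nonneg_of_le (fun i => mul_nonneg (hpos i) ?_) (fun i => ?_)
      ((hsum.summable.mul_left m).add hmean.summable)
    · exact tsum_nonneg fun j => mul_nonneg (abs_nonneg _) (hpos j)
    · have := tsum_abs_sub_mul_le hpos hsum hmean (Nat.cast_nonneg (α := ℝ) i)
      nlinarith [hpos i]

theorem stmt_0 (μ : ℕ) (hμ : 0 < μ) (p : ℕ → ℝ)
    (hpos : ∀ n, 0 ≤ p n) (hsum : HasSum p 1)
    (hmean : HasSum (fun n : ℕ => (n : ℝ) * p n) (μ : ℝ)) :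
    W1 p (dirac μ) ≤ 2 * (μ : ℝ) * Gini (μ : ℝ) p := by
  have hμ' : (μ : ℝ) ≠ 0 := by positivity
  calc W1 p (dirac μ) ≤ ∑' j : ℕ, |(μ : ℝ) - j| * p j :=
        W1_dirac_le hpos hsum μ (summable_abs_sub_mul hpos hsum.summable hmean.summable μ)
    _ ≤ ∑' i : ℕ, ∑' j : ℕ, |(i : ℝ) - j| * p i * p j :=
        tsum_abs_sub_mul_le_tsum_tsum hpos hsum hmean
    _ = 2 * μ * Gini μ p := by
        rw [Gini]
        field_simp
end

section
/- Let μ > 0 and let p ∈ V_μ. Then 2 μ G[p] ≥ 2 (μ − (∑_{n≥0} √n · p_n)²); equivalently, if X is a random variable with law p, then μ G[p] ≥ Var[√X]. -/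
lemma sqrt_nat_le (n : ℕ) : Real.sqrt n ≤ (n : ℝ) := by
  rcases Nat.eq_zero_or_pos n with h | h
  · simp [h]
  · have h1 : (1 : ℝ) ≤ Real.sqrt n := by
      rw [show (1:ℝ) = Real.sqrt 1 by simp]
      exact Real.sqrt_le_sqrt (by exact_mod_cast h)
    have h2 : Real.sqrt n ^ 2 = (n : ℝ) := Real.sq_sqrt (Nat.cast_nonneg n)
    nlinarith

lemma sq_sub_sqrt_le (i j : ℕ) :
    (Real.sqrt i - Real.sqrt j) ^ 2 ≤ |(i : ℝ) - (j : ℝ)| := by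
  have hi : Real.sqrt i ^ 2 = (i : ℝ) := Real.sq_sqrt (Nat.cast_nonneg i)
  have hj : Real.sqrt j ^ 2 = (j : ℝ) := Real.sq_sqrt (Nat.cast_nonneg j)
  have hfac : (i : ℝ) - j = (Real.sqrt i - Real.sqrt j) * (Real.sqrt i + Real.sqrt j) := by
    linear_combination hj - hi
  have habs : |(i : ℝ) - j| = |Real.sqrt i - Real.sqrt j| * (Real.sqrt i + Real.sqrt j) := by
    rw [hfac, abs_mul,
      abs_of_nonneg (show (0:ℝ) ≤ Real.sqrt i + Real.sqrt j by positivity)]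
  have hle : |Real.sqrt i - Real.sqrt j| ≤ Real.sqrt i + Real.sqrt j := by
    have := abs_sub (Real.sqrt i) (Real.sqrt j)
    simpa [abs_of_nonneg (Real.sqrt_nonneg i), abs_of_nonneg (Real.sqrt_nonneg j)] using this
  calc (Real.sqrt i - Real.sqrt j) ^ 2
      = |Real.sqrt i - Real.sqrt j| * |Real.sqrt i - Real.sqrt j| := by
        rw [← sq_abs, sq]
    _ ≤ |Real.sqrt i - Real.sqrt j| * (Real.sqrt i + Real.sqrt j) :=
        mul_le_mul_of_nonneg_left hle (abs_nonneg _)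
    _ = |(i : ℝ) - j| := habs.symm

theorem stmt_4 (μ : ℝ) (hμ : 0 < μ) (p : ℕ → ℝ)
    (hpos : ∀ n, 0 ≤ p n) (hsum : HasSum p 1)
    (hmean : HasSum (fun n : ℕ => (n : ℝ) * p n) μ) :
    2 * μ * Gini μ p ≥ 2 * (μ - (∑' n : ℕ, Real.sqrt n * p n) ^ 2) := by
  classical
  have hp : Summable p := hsum.summable
  have hnp : Summable (fun n : ℕ => (n : ℝ) * p n) := hmean.summable
  have hsq : Summable (fun n : ℕ => Real.sqrt n * p n) :=
    Summable.of_nonneg_of_le (fun n => mul_nonneg (Real.sqrt_nonneg _) (hpos n))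
      (fun n => mul_le_mul_of_nonneg_right (sqrt_nat_le n) (hpos n)) hnp
  set s := ∑' n : ℕ, Real.sqrt n * p n with hs_def
  have hsS : HasSum (fun n : ℕ => Real.sqrt n * p n) s := hsq.hasSum
  -- inner sums for the (√i - √j)² kernel
  have hG : ∀ i : ℕ, HasSum (fun j : ℕ => (Real.sqrt i - Real.sqrt j) ^ 2 * p i * p j)
      (p i * ((i : ℝ) + μ - 2 * Real.sqrt i * s)) := by
    intro i
    have h1 : HasSum
        (fun j : ℕ => ((i : ℝ) * p j + (j : ℝ) * p j - 2 * Real.sqrt i * (Real.sqrt j * p j)) * p i)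
        (((i : ℝ) * 1 + μ - 2 * Real.sqrt i * s) * p i) :=
      (((hsum.mul_left (i : ℝ)).add hmean).sub (hsS.mul_left (2 * Real.sqrt i))).mul_right (p i)
    have he : (fun j : ℕ => (Real.sqrt i - Real.sqrt j) ^ 2 * p i * p j) =
        fun j : ℕ => ((i : ℝ) * p j + (j : ℝ) * p j - 2 * Real.sqrt i * (Real.sqrt j * p j)) * p i := by
      funext j
      have hi : Real.sqrt i ^ 2 = (i : ℝ) := Real.sq_sqrt (Nat.cast_nonneg i)
      have hj : Real.sqrt j ^ 2 = (j : ℝ) := Real.sq_sqrt (Nat.cast_nonneg j)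
      rw [sub_sq, hi, hj]; ring
    rw [he, show p i * ((i : ℝ) + μ - 2 * Real.sqrt i * s)
        = ((i : ℝ) * 1 + μ - 2 * Real.sqrt i * s) * p i from by ring]
    exact h1
  -- outer sum for the (√i - √j)² kernel
  have hGout : HasSum (fun i : ℕ => p i * ((i : ℝ) + μ - 2 * Real.sqrt i * s))
      (2 * (μ - s ^ 2)) := by
    have h1 : HasSum (fun i : ℕ => (i : ℝ) * p i + μ * p i - 2 * s * (Real.sqrt i * p i))
        (μ + μ * 1 - 2 * s * s) :=
      (hmean.add (hsum.mul_left μ)).sub (hsS.mul_left (2 * s))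
    have he : (fun i : ℕ => p i * ((i : ℝ) + μ - 2 * Real.sqrt i * s)) =
        fun i : ℕ => (i : ℝ) * p i + μ * p i - 2 * s * (Real.sqrt i * p i) := by
      funext i; ring
    rw [he, show (2 : ℝ) * (μ - s ^ 2) = μ + μ * 1 - 2 * s * s from by ring]
    exact h1
  -- inner sums for the |i - j| kernel: comparisons
  have hrowBound : ∀ i : ℕ, HasSum (fun j : ℕ => ((i : ℝ) * p j + (j : ℝ) * p j) * p i)
      (((i : ℝ) * 1 + μ) * p i) := fun i =>
    ((hsum.mul_left (i : ℝ)).add hmean).mul_right (p i)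
  have hAbsRowLe : ∀ i j : ℕ,
      |(i : ℝ) - (j : ℝ)| * p i * p j ≤ ((i : ℝ) * p j + (j : ℝ) * p j) * p i := by
    intro i j
    have h1 : |(i : ℝ) - (j : ℝ)| ≤ (i : ℝ) + j := by
      have := abs_sub (i : ℝ) (j : ℝ)
      simpa [abs_of_nonneg (Nat.cast_nonneg i : (0:ℝ) ≤ i),
        abs_of_nonneg (Nat.cast_nonneg j : (0:ℝ) ≤ j)] using this
    calc |(i : ℝ) - (j : ℝ)| * p i * p j
        ≤ ((i : ℝ) + j) * p i * p j := by
          apply mul_le_mul_of_nonneg_right _ (hpos j)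
          exact mul_le_mul_of_nonneg_right h1 (hpos i)
      _ = ((i : ℝ) * p j + (j : ℝ) * p j) * p i := by ring
  have hAbsRow : ∀ i : ℕ, Summable (fun j : ℕ => |(i : ℝ) - (j : ℝ)| * p i * p j) := by
    intro i
    exact Summable.of_nonneg_of_le
      (fun j => mul_nonneg (mul_nonneg (abs_nonneg _) (hpos i)) (hpos j))
      (hAbsRowLe i) (hrowBound i).summable
  -- pointwise comparison of kernels
  have hker : ∀ i j : ℕ,
      (Real.sqrt i - Real.sqrt j) ^ 2 * p i * p j ≤ |(i : ℝ) - (j : ℝ)| * p i * p j := by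
    intro i j
    apply mul_le_mul_of_nonneg_right _ (hpos j)
    exact mul_le_mul_of_nonneg_right (sq_sub_sqrt_le i j) (hpos i)
  -- row sums comparison
  have hrow : ∀ i : ℕ, p i * ((i : ℝ) + μ - 2 * Real.sqrt i * s)
      ≤ ∑' j : ℕ, |(i : ℝ) - (j : ℝ)| * p i * p j := by
    intro i
    rw [← (hG i).tsum_eq]
    exact Summable.tsum_le_tsum (hker i) (hG i).summable (hAbsRow i)
  -- outer summability of the |i-j| row sums
  have hAbsOutBound : Summable (fun i : ℕ => ((i : ℝ) * 1 + μ) * p i) := by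
    refine (hnp.add (hp.mul_left μ)).congr fun i => by ring
  have hAbsOut : Summable (fun i : ℕ => ∑' j : ℕ, |(i : ℝ) - (j : ℝ)| * p i * p j) := by
    apply Summable.of_nonneg_of_le
      (fun i => tsum_nonneg fun j => mul_nonneg (mul_nonneg (abs_nonneg _) (hpos i)) (hpos j))
      (fun i => ?_) hAbsOutBound
    rw [← (hrowBound i).tsum_eq]
    exact Summable.tsum_le_tsum (hAbsRowLe i) (hAbsRow i) (hrowBound i).summable
  -- put things together
  have hS : 2 * (μ - s ^ 2) ≤ ∑' i : ℕ, ∑' j : ℕ, |(i : ℝ) - (j : ℝ)| * p i * p j := by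
    rw [← hGout.tsum_eq]
    exact Summable.tsum_le_tsum hrow hGout.summable hAbsOut
  have hGini : 2 * μ * Gini μ p = ∑' i : ℕ, ∑' j : ℕ, |(i : ℝ) - (j : ℝ)| * p i * p j := by
    rw [Gini]; field_simp
  rw [ge_iff_le, hGini]
  exact hS
end

section
/- Let μ > 0 and let p ∈ V_μ. Then ∑_{n≥0} |n − μ| p_n ≤ 2√2 · √μ · √(μ − (∑_{n≥0} √n · p_n)²); equivalently, if X is a random variable with law p, then E|X − μ| ≤ 2√2 · √μ · √(Var[√X]). -/
open Real

theorem Real.tsum_sqrt_mul_sqrt_le {ι : Type*} {f g : ι → ℝ} (hf : ∀ i, 0 ≤ f i)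
    (hg : ∀ i, 0 ≤ g i) (hfs : Summable f) (hgs : Summable g) :
    ∑' i, √(f i) * √(g i) ≤ √(∑' i, f i) * √(∑' i, g i) := by
  have hsum : Summable fun i ↦ √(f i) * √(g i) := by
    refine .of_nonneg_of_le (fun i ↦ by positivity) (fun i ↦ ?_) (hfs.add hgs)
    nlinarith [sq_nonneg (√(f i) - √(g i)), sq_sqrt (hf i), sq_sqrt (hg i)]
  refine hsum.tsum_le_of_sum_le fun s ↦ (sum_sqrt_mul_sqrt_le s hf hg).trans ?_
  gcongr
  · exact hfs.sum_le_tsum s fun i _ ↦ hf i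
  · exact hgs.sum_le_tsum s fun i _ ↦ hg i

section Moments

variable {ι : Type*} {x p : ι → ℝ} {μ : ℝ}

theorem summable_sqrt_mul (hx : ∀ i, 0 ≤ x i) (hp : ∀ i, 0 ≤ p i) (hps : Summable p)
    (hxp : Summable fun i ↦ x i * p i) : Summable fun i ↦ √(x i) * p i := by
  refine .of_nonneg_of_le (fun i ↦ by have := hp i; positivity) (fun i ↦ ?_) (hps.add hxp)
  have : √(x i) ≤ 1 + x i := by nlinarith [sq_sqrt (hx i), sqrt_nonneg (x i)]
  nlinarith [hp i]

theorem hasSum_sqrt_add_sq_mul (hx : ∀ i, 0 ≤ x i) {s : ℝ} (hsum : HasSum p 1)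
    (hmean : HasSum (fun i ↦ x i * p i) μ) (hs : HasSum (fun i ↦ √(x i) * p i) s) (c : ℝ) :
    HasSum (fun i ↦ (√(x i) + c) ^ 2 * p i) (μ + 2 * c * s + c ^ 2) := by
  convert (hmean.add (hs.mul_left (2 * c))).add (hsum.mul_left (c ^ 2)) using 1
  · ext i
    linear_combination p i * sq_sqrt (hx i)
  · ring

theorem abs_sub_mul_eq_sqrt_mul_sqrt {a b q : ℝ} (ha : 0 ≤ a) (hb : 0 ≤ b) (hq : 0 ≤ q) :
    |a - b| * q = √((√a - √b) ^ 2 * q) * √((√a + √b) ^ 2 * q) := by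
  have : (√a - √b) ^ 2 * q * ((√a + √b) ^ 2 * q) = ((a - b) * q) ^ 2 := by
    linear_combination q ^ 2 * (√a ^ 2 - √b ^ 2 + a - b) * (sq_sqrt ha - sq_sqrt hb)
  rw [← sqrt_mul (by positivity), this, sqrt_sq_eq_abs, abs_mul, abs_of_nonneg hq]

theorem tsum_abs_sub_mean_mul_le (hx : ∀ i, 0 ≤ x i) (hp : ∀ i, 0 ≤ p i) (hsum : HasSum p 1)
    (hmean : HasSum (fun i ↦ x i * p i) μ) :
    ∑' i, |x i - μ| * p i ≤ 2 * √μ * √(μ - (∑' i, √(x i) * p i) ^ 2) := by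
  have hμ : 0 ≤ μ := hasSum_le (fun i ↦ mul_nonneg (hx i) (hp i)) hasSum_zero hmean
  set s := ∑' i, √(x i) * p i
  have hs : HasSum (fun i ↦ √(x i) * p i) s :=
    (summable_sqrt_mul hx hp hsum.summable hmean.summable).hasSum
  have hminus := hasSum_sqrt_add_sq_mul hx hsum hmean hs (-√μ)
  have hplus := hasSum_sqrt_add_sq_mul hx hsum hmean hs √μ
  simp only [← sub_eq_add_neg] at hminus
  have hminus_nonneg : 0 ≤ μ + 2 * -√μ * s + (-√μ) ^ 2 :=
    hminus.nonneg fun i ↦ mul_nonneg (sq_nonneg _) (hp i)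
  calc ∑' i, |x i - μ| * p i
      = ∑' i, √((√(x i) - √μ) ^ 2 * p i) * √((√(x i) + √μ) ^ 2 * p i) :=
        tsum_congr fun i ↦ abs_sub_mul_eq_sqrt_mul_sqrt (hx i) hμ (hp i)
    _ ≤ √(μ + 2 * -√μ * s + (-√μ) ^ 2) * √(μ + 2 * √μ * s + √μ ^ 2) := by
        rw [← hminus.tsum_eq, ← hplus.tsum_eq]
        exact tsum_sqrt_mul_sqrt_le (fun i ↦ mul_nonneg (sq_nonneg _) (hp i))
          (fun i ↦ mul_nonneg (sq_nonneg _) (hp i)) hminus.summable hplus.summable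
    _ = √((2 * √μ) ^ 2 * (μ - s ^ 2)) := by
        rw [← sqrt_mul hminus_nonneg]
        congr 1
        linear_combination (√μ ^ 2 - μ) * sq_sqrt hμ
    _ = 2 * √μ * √(μ - s ^ 2) := by
        rw [sqrt_mul (by positivity), sqrt_sq (by positivity)]

end Moments

theorem stmt_5_general (μ : ℝ) (p : ℕ → ℝ)
    (hpos : ∀ n, 0 ≤ p n) (hsum : HasSum p 1)
    (hmean : HasSum (fun n : ℕ => (n : ℝ) * p n) μ) :
    (∑' n : ℕ, |(n : ℝ) - μ| * p n) ≤
      2 * Real.sqrt 2 * Real.sqrt μ *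
        Real.sqrt (μ - (∑' n : ℕ, Real.sqrt n * p n) ^ 2) := by
  calc (∑' n : ℕ, |(n : ℝ) - μ| * p n)
      ≤ 2 * 1 * √μ * √(μ - (∑' n : ℕ, √n * p n) ^ 2) := by
        rw [mul_one]
        exact tsum_abs_sub_mean_mul_le (fun n ↦ n.cast_nonneg) hpos hsum hmean
    _ ≤ 2 * √2 * √μ * √(μ - (∑' n : ℕ, √n * p n) ^ 2) := by
        gcongr
        exact one_le_sqrt.2 one_le_two

theorem stmt_5 (μ : ℝ) (hμ : 0 < μ) (p : ℕ → ℝ)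
    (hpos : ∀ n, 0 ≤ p n) (hsum : HasSum p 1)
    (hmean : HasSum (fun n : ℕ => (n : ℝ) * p n) μ) :
    (∑' n : ℕ, |(n : ℝ) - μ| * p n) ≤
      2 * Real.sqrt 2 * Real.sqrt μ *
        Real.sqrt (μ - (∑' n : ℕ, Real.sqrt n * p n) ^ 2) :=
  stmt_5_general μ p hpos hsum hmean
end

section
/- Let μ ∈ (0,1) and let p ∈ V_μ. Then W1(p, p*) = 2 (μ − (1 − p_0)), where p* is the shifted Bernoulli distribution with mean μ, which for μ ∈ (0,1) satisfies p*_0 = 1−μ, p*_1 = μ. -/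
open Finset Filter

lemma cdf_zero (p : ℕ → ℝ) : cdf p 0 = p 0 := by
  simp [cdf]

lemma sum_range_one_sub_cdf (p : ℕ → ℝ) (N : ℕ) :
    ∑ n ∈ range N, (1 - cdf p n)
      = ∑ m ∈ range N, (m : ℝ) * p m + N * (1 - ∑ m ∈ range N, p m) := by
  induction N with
  | zero => simp
  | succ N ih =>
    rw [sum_range_succ, ih, cdf]
    simp only [sum_range_succ]
    push_cast
    ring

lemma cdf_pstar_of_lt_one {μ : ℝ} (hμ : μ < 1) (n : ℕ) :
    cdf (pstar μ) n = if n = 0 then 1 - μ else 1 := by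
  have hfloor : ⌊μ⌋₊ = 0 := Nat.floor_eq_zero.mpr hμ
  induction n with
  | zero => simp [cdf, pstar, hfloor]
  | succ k ih =>
    rw [cdf, sum_range_succ, ← cdf, ih]
    rcases k with _ | k
    · norm_num [pstar, hfloor]
    · simp [pstar, hfloor]

section TailSum

variable {p : ℕ → ℝ} {μ : ℝ}

lemma cdf_le_one (hpos : ∀ n, 0 ≤ p n) (hsum : HasSum p 1) (n : ℕ) : cdf p n ≤ 1 :=
  sum_le_hasSum _ (fun m _ => hpos m) hsum

lemma natCast_mul_tail_le (hpos : ∀ n, 0 ≤ p n) (hsum : HasSum p 1)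
    (hmean : HasSum (fun n : ℕ => (n : ℝ) * p n) μ) (N : ℕ) :
    N * (1 - ∑ m ∈ range N, p m) ≤ μ - ∑ m ∈ range N, (m : ℝ) * p m := by
  have htail := (hasSum_nat_add_iff' N).mpr hsum
  have htail_mean := (hasSum_nat_add_iff' N).mpr hmean
  refine hasSum_le (fun m => ?_) (htail.mul_left (N : ℝ)) htail_mean
  exact mul_le_mul_of_nonneg_right (by simp) (hpos _)

theorem hasSum_one_sub_cdf (hpos : ∀ n, 0 ≤ p n) (hsum : HasSum p 1)
    (hmean : HasSum (fun n : ℕ => (n : ℝ) * p n) μ) :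
    HasSum (fun n => 1 - cdf p n) μ := by
  -- The partial sums are squeezed between `∑_{m<N} m pₘ` and `μ`.
  rw [hasSum_iff_tendsto_nat_of_nonneg (fun n => sub_nonneg.2 (cdf_le_one hpos hsum n))]
  refine tendsto_of_tendsto_of_tendsto_of_le_of_le hmean.tendsto_sum_nat tendsto_const_nhds
    (fun N => ?_) (fun N => ?_) <;> rw [sum_range_one_sub_cdf]
  · have htail : 0 ≤ 1 - ∑ m ∈ range N, p m :=
      sub_nonneg.2 (sum_le_hasSum _ (fun m _ => hpos m) hsum)
    exact le_add_of_nonneg_right (mul_nonneg N.cast_nonneg htail)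
  · linarith [natCast_mul_tail_le hpos hsum hmean N]

end TailSum

theorem stmt_11_general (μ : ℝ) (hμ1 : μ < 1) (p : ℕ → ℝ)
    (hpos : ∀ n, 0 ≤ p n) (hsum : HasSum p 1)
    (hmean : HasSum (fun n : ℕ => (n : ℝ) * p n) μ) :
    W1 p (pstar μ) = 2 * (μ - (1 - p 0)) := by
  have htail_sum := hasSum_one_sub_cdf hpos hsum hmean
  have hp0 : 1 - μ ≤ p 0 := by
    have := le_hasSum htail_sum 0 fun n _ => sub_nonneg.2 (cdf_le_one hpos hsum n)
    rw [cdf_zero] at this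
    linarith
  have hhead : |cdf p 0 - cdf (pstar μ) 0| = p 0 - (1 - μ) := by
    rw [cdf_zero, cdf_pstar_of_lt_one hμ1, if_pos rfl, abs_of_nonneg (by linarith)]
  have hterm : ∀ n, |cdf p (n + 1) - cdf (pstar μ) (n + 1)| = 1 - cdf p (n + 1) := fun n => by
    rw [cdf_pstar_of_lt_one hμ1, if_neg n.succ_ne_zero, abs_sub_comm,
      abs_of_nonneg (sub_nonneg.2 (cdf_le_one hpos hsum _))]
  have htail : HasSum (fun n => |cdf p (n + 1) - cdf (pstar μ) (n + 1)|) (μ - (1 - p 0)) := by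
    have h := (hasSum_nat_add_iff' 1).mpr htail_sum
    rwa [sum_range_one, cdf_zero, ← funext hterm] at h
  have hW := (hasSum_nat_add_iff (f := fun n => |cdf p n - cdf (pstar μ) n|) 1).mp htail
  rw [sum_range_one, hhead] at hW
  rw [W1, hW.tsum_eq]
  ring

theorem stmt_11 (μ : ℝ) (hμ0 : 0 < μ) (hμ1 : μ < 1) (p : ℕ → ℝ)
    (hpos : ∀ n, 0 ≤ p n) (hsum : HasSum p 1)
    (hmean : HasSum (fun n : ℕ => (n : ℝ) * p n) μ) :
    W1 p (pstar μ) = 2 * (μ - (1 - p 0)) :=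
  stmt_11_general μ hμ1 p hpos hsum hmean
end

section
/- Let μ > 0 and let p ∈ V_μ. Then 1 − p_0 ≤ √(μ (1 − G[p])). -/
theorem stmt_18 (μ : ℝ) (hμ : 0 < μ) (p : ℕ → ℝ)
    (hpos : ∀ n, 0 ≤ p n) (hsum : HasSum p 1)
    (hmean : HasSum (fun n : ℕ => (n : ℝ) * p n) μ) :
    1 - p 0 ≤ Real.sqrt (μ * (1 - Gini μ p)) := by
  set q : ℕ → ℝ := fun n => (n : ℝ) * p n with hq_def
  have hqpos : ∀ n, 0 ≤ q n := fun n => mul_nonneg (Nat.cast_nonneg n) (hpos n)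
  set g : ℕ → ℝ := fun n => if n = 0 then 0 else p n with hg_def
  have hgpos : ∀ n, 0 ≤ g n := by
    intro n; by_cases h : n = 0 <;> simp [hg_def, h, hpos n]
  have hg : HasSum g (1 - p 0) := by
    have h1 : HasSum (fun n : ℕ => if n = 0 then p 0 else 0) (p 0) := hasSum_ite_eq 0 (p 0)
    have := hsum.sub h1
    convert this using 1
    case e'_3 => rfl
    funext n
    by_cases h : n = 0 <;> simp [hg_def, h]
  -- Functions on ℕ × ℕ
  set A : ℕ × ℕ → ℝ := fun x => q x.1 * p x.2 with hA_def
  set B : ℕ × ℕ → ℝ := fun x => p x.1 * q x.2 with hB_def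
  set Mf : ℕ × ℕ → ℝ := fun x => min (x.1 : ℝ) (x.2 : ℝ) * p x.1 * p x.2 with hMf_def
  set F : ℕ × ℕ → ℝ := fun x => |(x.1 : ℝ) - (x.2 : ℝ)| * p x.1 * p x.2 with hF_def
  have hAsummable : Summable A :=
    hmean.summable.mul_of_nonneg hsum.summable hqpos hpos
  have hBsummable : Summable B :=
    hsum.summable.mul_of_nonneg hmean.summable hpos hqpos
  have hA : HasSum A μ := by
    have := hmean.mul hsum hAsummable
    simpa using this
  have hB : HasSum B μ := by
    have := hsum.mul hmean hBsummable
    simpa using this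
  have hMfpos : ∀ x, 0 ≤ Mf x := by
    intro x
    exact mul_nonneg (mul_nonneg (le_min (Nat.cast_nonneg _) (Nat.cast_nonneg _)) (hpos _)) (hpos _)
  have hMfle : ∀ x, Mf x ≤ A x := by
    intro x
    simp only [hMf_def, hA_def, hq_def]
    rw [mul_assoc, mul_assoc]
    exact mul_le_mul_of_nonneg_right (min_le_left _ _) (mul_nonneg (hpos _) (hpos _))
  have hMsummable : Summable Mf := Summable.of_nonneg_of_le hMfpos hMfle hAsummable
  set M : ℝ := ∑' x, Mf x with hM_def
  have hM : HasSum Mf M := hMsummable.hasSum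
  -- pointwise identity |i-j| = i + j - 2 min i j
  have hpt : ∀ x : ℕ × ℕ, F x = A x + B x - 2 * Mf x := by
    intro ⟨i, j⟩
    simp only [hF_def, hA_def, hB_def, hMf_def, hq_def]
    rcases le_total (i : ℝ) (j : ℝ) with h | h
    · rw [abs_of_nonpos (by linarith), min_eq_left h]; ring
    · rw [abs_of_nonneg (by linarith), min_eq_right h]; ring
  have hF : HasSum F (μ + μ - 2 * M) := by
    have := (hA.add hB).sub (hM.mul_left 2)
    convert this using 1
    case e'_3 => rfl
    funext x; exact hpt x
  -- the iterated tsum in Gini equals the tsum over the product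
  have hGini : Gini μ p = (1 / (2 * μ)) * (μ + μ - 2 * M) := by
    unfold Gini
    congr 1
    exact (Summable.tsum_prod hF.summable).symm.trans hF.tsum_eq
  -- lower bound M ≥ (1 - p 0)^2
  have hGprod : HasSum (fun x : ℕ × ℕ => g x.1 * g x.2) ((1 - p 0) * (1 - p 0)) :=
    hg.mul hg (hg.summable.mul_of_nonneg hg.summable hgpos hgpos)
  have hle : ∀ x : ℕ × ℕ, g x.1 * g x.2 ≤ Mf x := by
    intro ⟨i, j⟩
    by_cases hi : i = 0
    · simpa [hg_def, hi] using hMfpos (0, j)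
    by_cases hj : j = 0
    · simpa [hg_def, hj] using hMfpos (i, 0)
    · simp only [hg_def, hMf_def, if_neg hi, if_neg hj]
      have h1 : (1 : ℝ) ≤ (i : ℝ) := by exact_mod_cast Nat.one_le_iff_ne_zero.mpr hi
      have h2 : (1 : ℝ) ≤ (j : ℝ) := by exact_mod_cast Nat.one_le_iff_ne_zero.mpr hj
      have : (1 : ℝ) ≤ min (i : ℝ) (j : ℝ) := le_min h1 h2
      nlinarith [hpos i, hpos j, mul_nonneg (hpos i) (hpos j)]
  have hMlb : (1 - p 0) * (1 - p 0) ≤ M := by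
    rw [hM_def, ← hGprod.tsum_eq]
    exact Summable.tsum_le_tsum hle hGprod.summable hMsummable
  have hkey : μ * (1 - Gini μ p) = M := by
    rw [hGini]
    field_simp
    ring
  have hp0 : p 0 ≤ 1 := by
    have := hsum.tsum_eq
    calc p 0 ≤ ∑' n, p n := Summable.le_tsum hsum.summable 0 (fun i _ => hpos i)
    _ = 1 := this
  rw [hkey]
  rw [Real.le_sqrt (by linarith) (by nlinarith)]
  nlinarith
end
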